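/- Let b be an alternately shift maximal sequence and G_b its graph presentation. There is an edge labelled b_{i+1} from V_i to V_{i+1} for every i ≥ 0; moreover any other edge from V_i labelled a requires: if i is odd then b_{i+1} + 1 ≤ a, and if i is even then a ≤ b_{i+1} − 1, and in both cases b₁⋯b_i a must lie in the language of Σ_b with k(b₁⋯b_i a) equal to the target index. -/
import Mathlib


def altLt (x y : ℕ → ℕ) : Prop :=
  ∃ j : ℕ, (∀ k < j, x k = y k) ∧ (-1 : ℤ) ^ (j + 1) * ((y j : ℤ) - (x j : ℤ)) < 0

def altLe (x y : ℕ → ℕ) : Prop := x = y ∨ altLt x y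

def shift (x : ℕ → ℕ) : ℕ → ℕ := fun n => x (n + 1)

def AltShiftMaximal (b : ℕ → ℕ) : Prop :=
  (∀ n, b n ∈ Finset.Icc 1 (b 0)) ∧ ∀ n, altLe (shift^[n] b) b

def SigmaB (b : ℕ → ℕ) : Set (ℕ → ℕ) :=
  {x | (∀ n, x n ∈ Finset.Icc 1 (b 0)) ∧ ∀ k, altLe (shift^[k] x) b}

def InLanguage (b : ℕ → ℕ) (n : ℕ) (w : ℕ → ℕ) : Prop :=
  ∃ x ∈ SigmaB b, ∀ k < n, x k = w k

def SuffixMatch (b : ℕ → ℕ) (n : ℕ) (w : ℕ → ℕ) (k : ℕ) : Prop :=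
  k ≤ n ∧ ∀ i < k, w (n - k + i) = b i

def KIs (b : ℕ → ℕ) (n : ℕ) (w : ℕ → ℕ) (k : ℕ) : Prop :=
  SuffixMatch b n w k ∧ ∀ k', SuffixMatch b n w k' → k' ≤ k

def extendWord (n : ℕ) (w : ℕ → ℕ) (a : ℕ) : ℕ → ℕ :=
  fun t => if t < n then w t else a

def Edge (b : ℕ → ℕ) (i j a : ℕ) : Prop :=
  ∃ n w, InLanguage b n w ∧ KIs b n w i ∧
    InLanguage b (n + 1) (extendWord n w a) ∧ KIs b (n + 1) (extendWord n w a) j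


lemma shift_iter (x : ℕ → ℕ) (m n : ℕ) : (shift^[m] x) n = x (n + m) := by
  induction m generalizing n with
  | zero => simp
  | succ m ih =>
    rw [Function.iterate_succ_apply']
    show (shift^[m] x) (n + 1) = _
    rw [ih]
    congr 1
    omega


/-- Structure of the edges of the graph presentation `G_b` (Proposition 4.2(4)):
there is always an edge labelled `b_{i+1}` from `V_i` to `V_{i+1}` and any other
edge from `V_i` labelled `a` satisfies the stated parity constraints, with
`b₁⋯b_i a` in the language and `k(b₁⋯b_i a)` equal to the target index. -/
theorem edge_structure (b : ℕ → ℕ) (hb : AltShiftMaximal b) :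
    (∀ i : ℕ, Edge b i (i + 1) (b i)) ∧
    (∀ i j a : ℕ, Edge b i j a → ¬(j = i + 1 ∧ a = b i) →
      (Odd i → b i + 1 ≤ a) ∧ (Even i → a ≤ b i - 1) ∧
      InLanguage b (i + 1) (extendWord i b a) ∧
      KIs b (i + 1) (extendWord i b a) j) := by
  obtain ⟨hbmem, hbshift⟩ := hb
  have hbS : b ∈ SigmaB b := ⟨hbmem, hbshift⟩
  constructor
  · -- the edge labelled b i from V_i to V_{i+1}
    intro i
    refine ⟨i, b, ⟨b, hbS, fun k _ => rfl⟩, ?_, ?_, ?_⟩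
    · refine ⟨⟨le_refl i, fun t ht => ?_⟩, fun k' hk' => hk'.1⟩
      congr 1; omega
    · refine ⟨b, hbS, fun k hk => ?_⟩
      unfold extendWord
      split
      · rfl
      · have : k = i := by omega
        rw [this]
    · refine ⟨⟨le_refl _, fun t ht => ?_⟩, fun k' hk' => hk'.1⟩
      unfold extendWord
      have h1 : i + 1 - (i + 1) + t = t := by omega
      rw [h1]
      split
      · rfl
      · have : t = i := by omega
        rw [this]
  · rintro i j a ⟨n, w, hw, hki, hwa, hkj⟩ hne
    set wa := extendWord n w a with hwa_def
    have hin : i ≤ n := hki.1.1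
    have hws : ∀ t < i, w (n - i + t) = b t := hki.1.2
    have hwa_lt : ∀ p < n, wa p = w p := by
      intro p hp; simp [hwa_def, extendWord, hp]
    have hwa_n : wa n = a := by simp [hwa_def, extendWord]
    -- j ≤ i + 1
    have hj_le : j ≤ i + 1 := by
      rcases Nat.eq_zero_or_pos j with h0 | hpos
      · omega
      · obtain ⟨j', rfl⟩ : ∃ j', j = j' + 1 := ⟨j - 1, by omega⟩
        have hsj := hkj.1
        have hj'n : j' + 1 ≤ n + 1 := hsj.1
        have : SuffixMatch b n w j' := by
          refine ⟨by omega, fun t ht => ?_⟩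
          have h1 := hsj.2 t (by omega)
          have h2 : n + 1 - (j' + 1) + t = n - j' + t := by omega
          rw [h2] at h1
          rwa [hwa_lt _ (by omega)] at h1
        have := hki.2 j' this
        omega
    -- a = b i would force j = i + 1
    have habi : a ≠ b i := by
      intro heq
      have hsm : SuffixMatch b (n + 1) wa (i + 1) := by
        refine ⟨by omega, fun t ht => ?_⟩
        have h2 : n + 1 - (i + 1) + t = n - i + t := by omega
        rw [h2]
        rcases Nat.lt_or_ge t i with h | h
        · rw [hwa_lt _ (by omega)]; exact hws t h
        · have ht2 : t = i := by omega
          rw [ht2]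
          have h4 : n - i + i = n := by omega
          rw [h4, hwa_n, heq]
      have := hkj.2 _ hsm
      exact hne ⟨by omega, heq⟩
    -- the witness sequence
    obtain ⟨x, ⟨hxmem, hxshift⟩, hxw⟩ := hwa
    have hxlt : ∀ p < n, x p = w p := by
      intro p hp
      have := hxw p (by omega)
      rwa [hwa_lt _ hp] at this
    have hxn : x n = a := by
      have := hxw n (by omega)
      rwa [hwa_n] at this
    set y := shift^[n - i] x with hy_def
    have hy : ∀ k, y k = x (k + (n - i)) := fun k => shift_iter x (n - i) k
    have hyb : ∀ k < i, y k = b k := by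
      intro k hk
      rw [hy]
      have h1 : k + (n - i) = n - i + k := by omega
      rw [h1, hxlt _ (by omega)]
      exact hws k hk
    have hyi : y i = a := by
      rw [hy]
      have : i + (n - i) = n := by omega
      rw [this, hxn]
    -- the strict alternating inequality at position i
    have hkey : (-1 : ℤ) ^ (i + 1) * ((b i : ℤ) - (a : ℤ)) < 0 := by
      rcases hxshift (n - i) with heq | ⟨m, hagree, hlt⟩
      · exact absurd (by rw [← hyi, hy_def, heq]) habi.symm
      · have hlt' : (-1 : ℤ) ^ (m + 1) * ((b m : ℤ) - (y m : ℤ)) < 0 := hlt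
        have hagree' : ∀ k < m, y k = b k := hagree
        rcases lt_trichotomy m i with hm | hm | hm
        · rw [show y m = b m from hyb m hm] at hlt'
          simp at hlt'
        · rw [hm, hyi] at hlt'; exact hlt'
        · exact absurd (by rw [← hyi]; exact (hagree' i hm).symm) habi.symm
    have hodd : Odd i → b i + 1 ≤ a := by
      intro hi
      have : (-1 : ℤ) ^ (i + 1) = 1 := (hi.add_one).neg_one_pow
      rw [this, one_mul] at hkey
      have : (b i : ℤ) < a := by linarith
      exact_mod_cast this
    have heven : Even i → a ≤ b i - 1 := by
      intro hi
      have : (-1 : ℤ) ^ (i + 1) = -1 := (Even.add_one hi).neg_one_pow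
      rw [this] at hkey
      have : (a : ℤ) < b i := by linarith
      have : a < b i := by exact_mod_cast this
      omega
    set u := extendWord i b a with hu_def
    have hu_lt : ∀ t < i, u t = b t := by
      intro t ht; simp [hu_def, extendWord, ht]
    have hu_i : u i = a := by simp [hu_def, extendWord]
    -- correspondence between u and wa
    have hcorr : ∀ t ≤ i, u t = wa (n - i + t) := by
      intro t ht
      rcases Nat.lt_or_ge t i with h | h
      · rw [hu_lt t h, hwa_lt _ (by omega)]
        exact (hws t h).symm
      · have ht2 : t = i := by omega
        rw [ht2]
        have h4 : n - i + i = n := by omega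
        rw [h4, hu_i, hwa_n]
    have hsm_iff : ∀ k' ≤ i + 1,
        (SuffixMatch b (i + 1) u k' ↔ SuffixMatch b (n + 1) wa k') := by
      intro k' hk'
      constructor
      · rintro ⟨_, h⟩
        refine ⟨by omega, fun t ht => ?_⟩
        have h1 := h t ht
        have h2 : i + 1 - k' + t ≤ i := by omega
        rw [hcorr _ h2] at h1
        have h3 : n - i + (i + 1 - k' + t) = n + 1 - k' + t := by omega
        rwa [h3] at h1
      · rintro ⟨_, h⟩
        refine ⟨hk', fun t ht => ?_⟩
        have h1 := h t ht
        have h2 : i + 1 - k' + t ≤ i := by omega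
        rw [hcorr _ h2]
        have h3 : n - i + (i + 1 - k' + t) = n + 1 - k' + t := by omega
        rwa [h3]
    refine ⟨hodd, heven, ?_, ?_, ?_⟩
    · -- InLanguage
      refine ⟨y, ⟨fun k => by rw [hy]; exact hxmem _, fun k => ?_⟩, fun k hk => ?_⟩
      · have : shift^[k] y = shift^[k + (n - i)] x := by
          rw [hy_def, ← Function.iterate_add_apply]
        rw [this]; exact hxshift _
      · rcases Nat.lt_or_ge k i with h | h
        · rw [hyb k h, hu_lt k h]
        · have : k = i := by omega
          subst this
          rw [hyi, hu_i]
    · exact (hsm_iff j hj_le).mpr hkj.1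
    · intro k' hk'
      exact hkj.2 k' ((hsm_iff k' hk'.1).mp hk')
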